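/- Exact antiderivative, off-diagonal entry: for every real t ≠ 0, the function G(z) = −i t²·conj(z)/(t² + |z|²) satisfies ∂G(z) = i t²·conj(z)²/(t² + |z|²)² and ∂̄G(z) = −i t⁴/(t² + |z|²)² for all z ∈ ℂ. -/

import Mathlib

open Complex

/-! A real-linear map `ℂ → ℂ` is `w ↦ a * w + b * conj w`, with Wirtinger derivatives `a` and `b`.
Keeping real derivatives in this form gives the usual sum, product and inverse rules, and
`G = -i t² · conj z · (t² + z conj z)⁻¹` is differentiated by them. The answer simplifies because
`(t² + |z|²) - z conj z = t²`. -/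

/-- Wirtinger derivative ∂f(z) = (1/2)(Df(z)(1) − i·Df(z)(i)). -/
noncomputable def wirtingerD (f : ℂ → ℂ) (z : ℂ) : ℂ :=
  (1 / 2) * (fderiv ℝ f z 1 - Complex.I * fderiv ℝ f z Complex.I)

/-- Conjugate Wirtinger derivative ∂̄f(z) = (1/2)(Df(z)(1) + i·Df(z)(i)). -/
noncomputable def wirtingerDBar (f : ℂ → ℂ) (z : ℂ) : ℂ :=
  (1 / 2) * (fderiv ℝ f z 1 + Complex.I * fderiv ℝ f z Complex.I)

noncomputable def wirtingerForm (a b : ℂ) : ℂ →L[ℝ] ℂ :=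
  a • ContinuousLinearMap.id ℝ ℂ + b • (conjCLE : ℂ →L[ℝ] ℂ)

@[simp]
theorem wirtingerForm_apply (a b w : ℂ) : wirtingerForm a b w = a * w + b * starRingEnd ℂ w :=
  rfl

def HasWirtingerDerivAt (f : ℂ → ℂ) (a b z : ℂ) : Prop :=
  HasFDerivAt f (wirtingerForm a b) z

theorem hasWirtingerDerivAt_const (c z : ℂ) : HasWirtingerDerivAt (fun _ => c) 0 0 z :=
  (hasFDerivAt_const c z).congr_fderiv <| by ext; simp

theorem hasWirtingerDerivAt_id (z : ℂ) : HasWirtingerDerivAt (fun w => w) 1 0 z :=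
  (hasFDerivAt_id z).congr_fderiv <| by ext; simp

theorem hasWirtingerDerivAt_conj (z : ℂ) :
    HasWirtingerDerivAt (fun w => starRingEnd ℂ w) 0 1 z :=
  (conjCLE : ℂ →L[ℝ] ℂ).hasFDerivAt.congr_fderiv <| by ext; simp

namespace HasWirtingerDerivAt

variable {f g : ℂ → ℂ} {a b c d z : ℂ}

theorem wirtingerD_eq (h : HasWirtingerDerivAt f a b z) : wirtingerD f z = a := by
  simp only [wirtingerD, h.fderiv, wirtingerForm_apply, map_one, conj_I]
  linear_combination (b - a) / 2 * I_mul_I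

theorem wirtingerDBar_eq (h : HasWirtingerDerivAt f a b z) : wirtingerDBar f z = b := by
  simp only [wirtingerDBar, h.fderiv, wirtingerForm_apply, map_one, conj_I]
  linear_combination (a - b) / 2 * I_mul_I

theorem add (hf : HasWirtingerDerivAt f a b z) (hg : HasWirtingerDerivAt g c d z) :
    HasWirtingerDerivAt (fun w => f w + g w) (a + c) (b + d) z :=
  (HasFDerivAt.add hf hg).congr_fderiv <| by
    ext w
    simp only [add_apply, wirtingerForm_apply]
    ring

theorem mul (hf : HasWirtingerDerivAt f a b z) (hg : HasWirtingerDerivAt g c d z) :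
    HasWirtingerDerivAt (fun w => f w * g w) (f z * c + g z * a) (f z * d + g z * b) z :=
  (HasFDerivAt.mul hf hg).congr_fderiv <| by
    ext w
    simp only [add_apply, smul_apply, smul_eq_mul, wirtingerForm_apply]
    ring

theorem inv (hf : HasWirtingerDerivAt f a b z) (hz : f z ≠ 0) :
    HasWirtingerDerivAt (fun w => (f w)⁻¹) (-a / f z ^ 2) (-b / f z ^ 2) z :=
  ((hasFDerivAt_inv' (𝕜 := ℝ) hz).comp z hf).congr_fderiv <| by
    ext w
    simp only [ContinuousLinearMap.comp_apply, neg_apply, ContinuousLinearMap.mulLeftRight_apply,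
      wirtingerForm_apply]
    field_simp
    ring

end HasWirtingerDerivAt

theorem stmt_12 (t : ℝ) (ht : t ≠ 0)
    (G : ℂ → ℂ)
    (hG : ∀ z, G z =
      -Complex.I * (t : ℂ) ^ 2 * (starRingEnd ℂ) z / ((t : ℂ) ^ 2 + (‖z‖ : ℂ) ^ 2)) :
    ∀ z : ℂ,
      wirtingerD G z =
        Complex.I * (t : ℂ) ^ 2 * ((starRingEnd ℂ) z) ^ 2 /
          ((t : ℂ) ^ 2 + (‖z‖ : ℂ) ^ 2) ^ 2 ∧
      wirtingerDBar G z =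
        -Complex.I * (t : ℂ) ^ 4 / ((t : ℂ) ^ 2 + (‖z‖ : ℂ) ^ 2) ^ 2 := by
  intro z
  have hG_eq : G = fun w =>
      -I * (t : ℂ) ^ 2 * starRingEnd ℂ w * ((t : ℂ) ^ 2 + w * starRingEnd ℂ w)⁻¹ := by
    funext w
    rw [hG, mul_conj', div_eq_mul_inv]
  have hden : (t : ℂ) ^ 2 + z * starRingEnd ℂ z ≠ 0 := by
    rw [mul_conj']
    exact_mod_cast (by positivity : (0 : ℝ) < t ^ 2 + ‖z‖ ^ 2).ne'
  have hW := ((hasWirtingerDerivAt_const (-I * (t : ℂ) ^ 2) z).mul (hasWirtingerDerivAt_conj z)).mul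
    (((hasWirtingerDerivAt_const ((t : ℂ) ^ 2) z).add
      ((hasWirtingerDerivAt_id z).mul (hasWirtingerDerivAt_conj z))).inv hden)
  rw [hG_eq, hW.wirtingerD_eq, hW.wirtingerDBar_eq, ← mul_conj']
  constructor <;> field_simp <;> ring
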